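/- Let ℓ be a nonzero linear form in n variables, let s ≥ 1 be an integer, and let p = Σ_{k=1}^{t} g_k² be a sum of squares of real polynomials g_k. If ℓ^{2s} divides p, then ℓ^{s} divides g_k for every k = 1,…,t. -/

import Mathlib

open MvPolynomial

/-- A real polynomial is a sum of squares (sos) if it equals a finite sum of squares
of real polynomials. -/
def IsSos {n : ℕ} (p : MvPolynomial (Fin n) ℝ) : Prop :=
  ∃ (k : ℕ) (g : Fin k → MvPolynomial (Fin n) ℝ), p = ∑ i, g i ^ 2

/-- A real polynomial is positive semidefinite (psd) if it takes nonnegative values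
at every real point. -/
def Psd {n : ℕ} (p : MvPolynomial (Fin n) ℝ) : Prop :=
  ∀ x : Fin n → ℝ, 0 ≤ eval x p

/-! Let `a` be the coefficient vector of `ℓ` and pick `b` with `∑ aᵢ bᵢ = 1` (possible as `ℓ ≠ 0`).
The substitution `Xᵢ ↦ Xᵢ - bᵢ ℓ` kills `ℓ` and is the identity modulo `ℓ`, so its kernel is
exactly the multiples of `ℓ`. Applied to `ℓ ∣ ∑ gₖ²` it yields a sum of squares equal to zero,
hence each `gₖ` maps to zero, i.e. `ℓ ∣ gₖ`. Writing `gₖ = ℓ hₖ` and cancelling `ℓ²` gives the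
induction on `s`. -/

namespace MvPolynomial

variable {σ R : Type*}

theorem IsHomogeneous.eq_sum_C_coeff_mul_X [CommSemiring R] [Fintype σ] {l : MvPolynomial σ R}
    (hl : l.IsHomogeneous 1) : l = ∑ i, C (coeff (Finsupp.single i 1) l) * X i := by
  classical
  ext m
  simp only [coeff_sum, coeff_C_mul, coeff_X, mul_ite, mul_one, mul_zero]
  by_cases hm : m.degree = 1
  · obtain ⟨i, rfl⟩ : m ∈ Set.range fun i ↦ Finsupp.single i 1 := Finsupp.range_single_one ▸ hm
    simp [Finsupp.single_left_inj one_ne_zero]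
  · rw [hl.coeff_eq_zero hm, eq_comm]
    refine Finset.sum_eq_zero fun i _ ↦ if_neg ?_
    rintro rfl
    exact hm (by simp)

theorem dvd_sub_aeval_of_forall_dvd_X_sub [CommRing R] {l : MvPolynomial σ R}
    {v : σ → MvPolynomial σ R} (hv : ∀ i, l ∣ X i - v i) (p : MvPolynomial σ R) :
    l ∣ p - aeval v p := by
  let I := Ideal.span {l}
  have hmk : (Ideal.Quotient.mkₐ R I).comp (aeval v) = Ideal.Quotient.mkₐ R I :=
    algHom_ext fun i ↦ by
      simpa [Ideal.Quotient.eq, I, Ideal.mem_span_singleton, dvd_sub_comm] using hv i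
  have := congr($hmk p)
  simp only [AlgHom.comp_apply, Ideal.Quotient.mkₐ_eq_mk, Ideal.Quotient.eq] at this
  rwa [Ideal.mem_span_singleton, dvd_sub_comm] at this

theorem eq_zero_of_sum_sq_eq_zero [Field R] [LinearOrder R] [IsStrictOrderedRing R]
    {ι : Type*} [Fintype ι] {g : ι → MvPolynomial σ R} (h : ∑ k, g k ^ 2 = 0) (k : ι) :
    g k = 0 :=
  funext fun x ↦ by
    have hx : ∑ i, eval x (g i) ^ 2 = 0 := by simpa using congr(eval x $h)
    simpa using (Finset.sum_eq_zero_iff_of_nonneg fun i _ ↦ sq_nonneg _).mp hx k (Finset.mem_univ k)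

section LinearForm

variable [Field R] [Fintype σ] {l : MvPolynomial σ R}

-- Inside `IsHomogeneous.*` declarations a bare `aeval` resolves to `IsHomogeneous.aeval`.
theorem IsHomogeneous.aeval_X_sub_C_mul_self_eq_zero (hl : l.IsHomogeneous 1) {b : σ → R}
    (hb : ∑ i, coeff (Finsupp.single i 1) l * b i = 1) :
    MvPolynomial.aeval (fun i ↦ X i - C (b i) * l) l = 0 := by
  have h := congr(MvPolynomial.aeval (fun i ↦ X i - C (b i) * l) $hl.eq_sum_C_coeff_mul_X)
  simp only [map_sum, map_mul, aeval_C, aeval_X, algebraMap_eq] at h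
  rw [h]
  calc ∑ i, C (coeff (Finsupp.single i 1) l) * (X i - C (b i) * l)
      = ∑ i, C (coeff (Finsupp.single i 1) l) * X i
        - C (∑ i, coeff (Finsupp.single i 1) l * b i) * l := by
        simp only [mul_sub, Finset.sum_sub_distrib, map_sum, map_mul, Finset.sum_mul, mul_assoc]
    _ = 0 := by rw [hb, map_one, one_mul, ← hl.eq_sum_C_coeff_mul_X, sub_self]

theorem IsHomogeneous.exists_dvd_iff_aeval_eq_zero (hl : l.IsHomogeneous 1) (hl0 : l ≠ 0) :
    ∃ v : σ → MvPolynomial σ R, ∀ p, l ∣ p ↔ MvPolynomial.aeval v p = 0 := by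
  classical
  obtain ⟨j, hj⟩ : ∃ j, coeff (Finsupp.single j 1) l ≠ 0 := by
    by_contra! h
    exact hl0 (by simpa [h] using hl.eq_sum_C_coeff_mul_X)
  let b : σ → R := Pi.single j (coeff (Finsupp.single j 1) l)⁻¹
  have hb : ∑ i, coeff (Finsupp.single i 1) l * b i = 1 := by simp [b, Pi.single_apply, hj]
  refine ⟨fun i ↦ X i - C (b i) * l, fun p ↦ ⟨?_, fun hp ↦ ?_⟩⟩
  · rintro ⟨q, rfl⟩
    rw [map_mul, hl.aeval_X_sub_C_mul_self_eq_zero hb, zero_mul]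
  · have hX : ∀ i, l ∣ X i - (X i - C (b i) * l) := fun i ↦ by
      rw [sub_sub_cancel]
      exact dvd_mul_left l _
    simpa only [hp, sub_zero] using dvd_sub_aeval_of_forall_dvd_X_sub hX p

variable [LinearOrder R] [IsStrictOrderedRing R] {ι : Type*} [Fintype ι] {g : ι → MvPolynomial σ R}

theorem IsHomogeneous.dvd_of_dvd_sum_sq (hl : l.IsHomogeneous 1) (hl0 : l ≠ 0)
    (h : l ∣ ∑ k, g k ^ 2) (k : ι) : l ∣ g k := by
  obtain ⟨v, hv⟩ := hl.exists_dvd_iff_aeval_eq_zero hl0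
  rw [hv, map_sum] at h
  simp only [map_pow] at h
  exact (hv _).mpr (eq_zero_of_sum_sq_eq_zero h k)

theorem IsHomogeneous.pow_dvd_of_pow_two_mul_dvd_sum_sq (hl : l.IsHomogeneous 1) (hl0 : l ≠ 0)
    {s : ℕ} (h : l ^ (2 * s) ∣ ∑ k, g k ^ 2) (k : ι) : l ^ s ∣ g k := by
  induction s generalizing g with
  | zero => simp
  | succ s ih =>
    choose q hq using hl.dvd_of_dvd_sum_sq hl0 ((dvd_pow_self l (by omega)).trans h)
    have hsum : ∑ k, g k ^ 2 = l ^ 2 * ∑ k, q k ^ 2 := by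
      simp_rw [hq, mul_pow, Finset.mul_sum]
    have hq_dvd : l ^ (2 * s) ∣ ∑ k, q k ^ 2 := by
      rw [← mul_dvd_mul_iff_left (pow_ne_zero 2 hl0), ← pow_add, ← hsum]
      convert h using 2
      ring
    rw [hq k, pow_succ']
    exact mul_dvd_mul_left l (ih hq_dvd)

end LinearForm

end MvPolynomial

theorem linear_power_divides_sos (n : ℕ) (l : MvPolynomial (Fin n) ℝ)
    (hl0 : l ≠ 0) (hl : l.IsHomogeneous 1) (s : ℕ)
    (t : ℕ) (g : Fin t → MvPolynomial (Fin n) ℝ)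
    (hdvd : l ^ (2 * s) ∣ ∑ k, g k ^ 2) :
    ∀ k, l ^ s ∣ g k :=
  hl.pow_dvd_of_pow_two_mul_dvd_sum_sq hl0 hdvd
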